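/- Suppose integers n ≥ 2, ε, r, s, t satisfy: k = ε(n-1) - 2r, s + t = -ε - r, s·t is an integer, and (n-1)(s² + t²) = 3nk - k² - (n+1)r². Then 2(n-1) divides 6r(r+1); in particular (n-1) divides 3r(r+1). -/

import Mathlib

/-! Writing `s² + t² = (s + t)² - 2st` turns the hypothesis into an integer identity. After
substituting `k` it rearranges to `6r(r + 1) = (n - 1) · X`, and the cofactor `X` is even because
it differs from `-n ε(ε + 1)` by an even number. -/

theorem sq_add_sq_eq_of_add_eq_of_mul_eq {R : Type*} [CommRing R] {s t a p : R}
    (hsum : s + t = a) (hprod : s * t = p) : s ^ 2 + t ^ 2 = a ^ 2 - 2 * p := by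
  rw [← hsum, ← hprod]
  ring

theorem six_mul_mul_add_one_eq {n ε r k m : ℤ} (hk : k = ε * (n - 1) - 2 * r)
    (h : (n - 1) * ((-ε - r) ^ 2 - 2 * m) = 3 * n * k - k ^ 2 - (n + 1) * r ^ 2) :
    6 * r * (r + 1)
      = (n - 1) * (2 * (2 * n * ε + ε * r - r ^ 2 - 3 * r + m) - n * (ε * (ε + 1))) := by
  subst hk
  linear_combination h

theorem two_mul_sub_one_dvd_six_mul_mul_add_one {n ε r k m : ℤ} (hk : k = ε * (n - 1) - 2 * r)
    (h : (n - 1) * ((-ε - r) ^ 2 - 2 * m) = 3 * n * k - k ^ 2 - (n + 1) * r ^ 2) :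
    2 * (n - 1) ∣ 6 * r * (r + 1) := by
  rw [six_mul_mul_add_one_eq hk h, mul_comm 2]
  refine mul_dvd_mul_left _ (even_iff_two_dvd.mp ?_)
  exact (even_two_mul _).sub ((Int.even_mul_succ_self ε).mul_left n)

theorem stmt13_general (n ε r k : ℤ) (s t : ℝ)
    (hk : k = ε * (n - 1) - 2 * r)
    (hst : s + t = -(ε : ℝ) - (r : ℝ))
    (hint : ∃ m : ℤ, s * t = (m : ℝ))
    (h2 : ((n : ℝ) - 1) * (s ^ 2 + t ^ 2)
        = 3 * (n : ℝ) * (k : ℝ) - (k : ℝ) ^ 2 - ((n : ℝ) + 1) * (r : ℝ) ^ 2) :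
    (2 * (n - 1)) ∣ 6 * r * (r + 1) ∧ (n - 1) ∣ 3 * r * (r + 1) := by
  obtain ⟨m, hm⟩ := hint
  rw [sq_add_sq_eq_of_add_eq_of_mul_eq hst hm] at h2
  have hZ : (n - 1) * ((-ε - r) ^ 2 - 2 * m) = 3 * n * k - k ^ 2 - (n + 1) * r ^ 2 := by
    exact_mod_cast h2
  have hdvd := two_mul_sub_one_dvd_six_mul_mul_add_one hk hZ
  refine ⟨hdvd, ?_⟩
  rw [show 6 * r * (r + 1) = 2 * (3 * r * (r + 1)) by ring] at hdvd
  exact (mul_dvd_mul_iff_left two_ne_zero).mp hdvd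

theorem stmt13 (n ε r k : ℤ) (hn : 2 ≤ n) (s t : ℝ)
    (hk : k = ε * (n - 1) - 2 * r)
    (hst : s + t = -(ε : ℝ) - (r : ℝ))
    (hint : ∃ m : ℤ, s * t = (m : ℝ))
    (h2 : ((n : ℝ) - 1) * (s ^ 2 + t ^ 2)
        = 3 * (n : ℝ) * (k : ℝ) - (k : ℝ) ^ 2 - ((n : ℝ) + 1) * (r : ℝ) ^ 2) :
    (2 * (n - 1)) ∣ 6 * r * (r + 1) ∧ (n - 1) ∣ 3 * r * (r + 1) :=
  stmt13_general n ε r k s t hk hst hint h2
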